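/- (Theorem 3.1) Let A be a commutative group, X a commutative partial monoid, i : A → X injective with free action, i(A) ⊆ C ⊆ X a submonoid, and φ : C → A × C/A a trivialisation. Then there exists a trivialisation φ' : X → A × X/A extending φ (φ'|_C = φ) if and only if the obstruction class [β] ∈ H²(X/A, C/A; A) vanishes. -/

import Mathlib

/-- A commutative partial monoid: addition is partially defined (via `Option`),
commutative, unital, and associative where defined. -/
structure PCM (X : Type*) where
  add : X → X → Option X
  zero : X
  comm : ∀ x y, add x y = add y x
  zero_add : ∀ x, add zero x = some x
  assoc : ∀ x y z xy yz, add x y = some xy → add y z = some yz →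
    add xy z = add x yz

/-- Homomorphism of commutative partial monoids. -/
def PCM.IsHom {X Y : Type*} (MX : PCM X) (MY : PCM Y) (f : X → Y) : Prop :=
  f MX.zero = MY.zero ∧
  ∀ x y z, MX.add x y = some z → MY.add (f x) (f y) = some (f z)

/-- `i : A → X` is an injective homomorphism of the group `A` into the
partial monoid `X` such that `i a + x` is always defined. -/
structure EmbedData {A X : Type*} [AddCommGroup A] (MX : PCM X) (i : A → X) : Prop where
  inj : Function.Injective i
  map_zero : i 0 = MX.zero
  map_add : ∀ a b, MX.add (i a) (i b) = some (i (a + b))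
  total : ∀ a x, (MX.add (i a) x).isSome

/-- The action `l_A : (a, x) ↦ i a + x` is free. -/
def FreeAction {A X : Type*} [AddCommGroup A] (MX : PCM X) (i : A → X) : Prop :=
  ∀ a a' x y, MX.add (i a) x = some y → MX.add (i a') x = some y → a = a'

/-- `π : X → Q` presents `Q` as the orbit space `X/A` of the action of `A` on `X`
via `i`, with the induced partial monoid structure. -/
structure QuotData {A X Q : Type*} [AddCommGroup A] (MX : PCM X) (MQ : PCM Q)
    (i : A → X) (π : X → Q) : Prop where
  surj : Function.Surjective π
  orbit : ∀ x y, π x = π y ↔ ∃ a, MX.add (i a) x = some y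
  hom : MX.IsHom MQ π
  lift : ∀ x y q, MQ.add (π x) (π y) = some q → (MX.add x y).isSome

/-- A left splitting of `A → X → X/A`: a homomorphism `s : X → A` with `s ∘ i = id`. -/
def IsLeftSplit {A X : Type*} [AddCommGroup A] (MX : PCM X) (i : A → X) (s : X → A) : Prop :=
  s MX.zero = 0 ∧
  (∀ x y z, MX.add x y = some z → s z = s x + s y) ∧
  (∀ a, s (i a) = a)

/-- A right splitting of `A → X → X/A`: a homomorphism `h : X/A → X` with `π ∘ h = id`. -/
def IsRightSplit {X Q : Type*} (MX : PCM X) (MQ : PCM Q)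
    (π : X → Q) (h : Q → X) : Prop :=
  MQ.IsHom MX h ∧ ∀ q, π (h q) = q

/-- A trivialisation `φ : X → A × X/A`: a homomorphism (into the product
partial monoid) with `φ ∘ i = in₁` and `proj₂ ∘ φ = π`. -/
def IsTriv {A X Q : Type*} [AddCommGroup A] (MX : PCM X) (MQ : PCM Q)
    (i : A → X) (π : X → Q) (φ : X → A × Q) : Prop :=
  φ MX.zero = (0, MQ.zero) ∧
  (∀ x y z, MX.add x y = some z →
    MQ.add (φ x).2 (φ y).2 = some (φ z).2 ∧ (φ z).1 = (φ x).1 + (φ y).1) ∧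
  (∀ a, φ (i a) = (a, MQ.zero)) ∧
  (∀ x, (φ x).2 = π x)

/-- A local trivialisation `φ : C → A × C/A` of the restriction of the sequence
to a submonoid `i(A) ⊆ C ⊆ X` (presented as a function on all of `X` whose
values off `C` are irrelevant). -/
def IsLocalTriv {A X Q : Type*} [AddCommGroup A] (MX : PCM X) (MQ : PCM Q)
    (i : A → X) (π : X → Q) (C : Set X) (φ : X → A × Q) : Prop :=
  (∀ x y z, x ∈ C → y ∈ C → MX.add x y = some z →
    MQ.add (φ x).2 (φ y).2 = some (φ z).2 ∧ (φ z).1 = (φ x).1 + (φ y).1) ∧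
  (∀ a, φ (i a) = (a, MQ.zero)) ∧
  (∀ x, x ∈ C → (φ x).2 = π x)

/-- `C` is a total submonoid of the partial monoid `X` containing `i(A)`. -/
def IsSubPCM {A X : Type*} [AddCommGroup A] (MX : PCM X) (i : A → X) (C : Set X) : Prop :=
  MX.zero ∈ C ∧
  (∀ a, i a ∈ C) ∧
  (∀ x y, x ∈ C → y ∈ C → (MX.add x y).isSome) ∧
  (∀ x y z, x ∈ C → y ∈ C → MX.add x y = some z → z ∈ C)

/-- `η : X/A → X` is a set-theoretic section of `π` (a choice of orbit
representatives). -/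
def IsSection {X Q : Type*} (π : X → Q) (η : Q → X) : Prop :=
  ∀ q, π (η q) = q

/-- `η` agrees with the right splitting `φ⁻¹ ∘ in₂` determined by the local
trivialisation `φ` on `C/A`: for `x ∈ C`, `η([x]) = x − i((φ x).1)`. -/
def AgreesOnC {A X Q : Type*} [AddCommGroup A] (MX : PCM X)
    (i : A → X) (π : X → Q) (C : Set X) (φ : X → A × Q) (η : Q → X) : Prop :=
  ∀ x ∈ C, MX.add (i (-(φ x).1)) x = some (η (π x))

/-- `β : X/A × X/A → A` is the 2-cochain measuring the failure of `η` to be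
a homomorphism: `η(q₁ + q₂) = η(q₁) + η(q₂) + i(β(q₁, q₂))` whenever
`q₁ + q₂` is defined. -/
def BetaSpec {A X Q : Type*} [AddCommGroup A] (MX : PCM X) (MQ : PCM Q)
    (i : A → X) (η : Q → X) (β : Q → Q → A) : Prop :=
  ∀ q₁ q₂ q₁₂, MQ.add q₁ q₂ = some q₁₂ →
    ∃ w, MX.add (η q₁) (η q₂) = some w ∧
      MX.add (i (β q₁ q₂)) w = some (η q₁₂)

/-! Given a trivialisation `φ'` extending `φ`, the cochain `γ q = -(φ' (η q)).1` has coboundary `β`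
and vanishes on `C/A` because `η` agrees with `φ⁻¹ ∘ in₂` there. Conversely, freeness of the
action gives every `x` a unique coordinate `c x` with `x = i (c x) + η [x]`; the defining relation
of `β` says `c` is additive up to `β`, so for `d¹γ = β` the map `x ↦ (c x - γ [x], [x])` is a
trivialisation, and on `C` it is `φ`. -/

theorem PCM.add_zero {X : Type*} (MX : PCM X) (x : X) : MX.add x MX.zero = some x := by
  rw [MX.comm]; exact MX.zero_add x

namespace EmbedData

variable {A X : Type*} [AddCommGroup A] {MX : PCM X} {i : A → X}

theorem add_neg_of_add (hemb : EmbedData MX i) {a : A} {x y : X}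
    (h : MX.add (i a) x = some y) : MX.add (i (-a)) y = some x := by
  rw [← MX.assoc (i (-a)) (i a) x _ y (hemb.map_add _ _) h, neg_add_cancel, hemb.map_zero,
    MX.zero_add]

theorem add_of_add_add (hemb : EmbedData MX i) {a b : A} {x y z : X}
    (h₁ : MX.add (i b) x = some y) (h₂ : MX.add (i a) y = some z) :
    MX.add (i (a + b)) x = some z :=
  (MX.assoc (i a) (i b) x _ y (hemb.map_add _ _) h₁).trans h₂

theorem exists_add_of_add_add (hemb : EmbedData MX i) {a : A} {x y xy s : X}
    (h₁ : MX.add (i a) x = some xy) (h₂ : MX.add xy y = some s) :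
    ∃ t, MX.add x y = some t ∧ MX.add (i a) t = some s := by
  obtain ⟨t, ht⟩ := Option.isSome_iff_exists.mp (hemb.total (-a) s)
  refine ⟨t, ?_, by simpa using hemb.add_neg_of_add ht⟩
  rw [MX.assoc _ _ _ _ _ (hemb.add_neg_of_add h₁) h₂, ht]

end EmbedData

section Quotient

variable {A X Q : Type*} [AddCommGroup A] {MX : PCM X} {MQ : PCM Q} {i : A → X} {π : X → Q}

theorem QuotData.map_embed (hemb : EmbedData MX i) (hquot : QuotData MX MQ i π) (a : A) :
    π (i a) = MQ.zero := by
  rw [← hquot.hom.1, hquot.orbit]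
  exact ⟨-a, by rw [hemb.map_add, neg_add_cancel, hemb.map_zero]⟩

theorem AgreesOnC.section_zero {C : Set X} {φ : X → A × Q} {η : Q → X}
    (hagree : AgreesOnC MX i π C φ η) (hemb : EmbedData MX i) (hquot : QuotData MX MQ i π)
    (hC : IsSubPCM MX i C) (hφ : IsLocalTriv MX MQ i π C φ) : η MQ.zero = MX.zero := by
  have hφ0 : (φ MX.zero).1 = 0 :=
    left_eq_add.mp (hφ.1 _ _ _ hC.1 hC.1 (MX.zero_add _)).2
  have h := hagree MX.zero hC.1
  rw [hφ0, neg_zero, hemb.map_zero, MX.zero_add, hquot.hom.1] at h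
  exact (Option.some_inj.mp h).symm

end Quotient

section Coordinate

variable {A X Q : Type*} [AddCommGroup A] {MX : PCM X} {MQ : PCM Q} {i : A → X} {π : X → Q}
  {η : Q → X}

noncomputable def orbitCoord (MX : PCM X) (i : A → X) (π : X → Q) (η : Q → X) (x : X) : A :=
  Classical.epsilon fun a => MX.add (i a) (η (π x)) = some x

theorem add_orbitCoord (hquot : QuotData MX MQ i π) (hη : IsSection π η) (x : X) :
    MX.add (i (orbitCoord MX i π η x)) (η (π x)) = some x :=
  Classical.epsilon_spec ((hquot.orbit _ _).mp (hη (π x)))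

theorem orbitCoord_eq_of_add (hquot : QuotData MX MQ i π) (hfree : FreeAction MX i)
    (hη : IsSection π η) {a : A} {x : X} (h : MX.add (i a) (η (π x)) = some x) :
    orbitCoord MX i π η x = a :=
  hfree _ _ _ _ (add_orbitCoord hquot hη x) h

theorem orbitCoord_embed (hemb : EmbedData MX i) (hquot : QuotData MX MQ i π)
    (hfree : FreeAction MX i) (hη : IsSection π η) (hη0 : η MQ.zero = MX.zero) (a : A) :
    orbitCoord MX i π η (i a) = a :=
  orbitCoord_eq_of_add hquot hfree hη (by rw [hquot.map_embed hemb, hη0, MX.add_zero])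

theorem orbitCoord_of_mem {C : Set X} {φ : X → A × Q} (hemb : EmbedData MX i)
    (hquot : QuotData MX MQ i π) (hfree : FreeAction MX i) (hη : IsSection π η)
    (hagree : AgreesOnC MX i π C φ η) {x : X} (hx : x ∈ C) :
    orbitCoord MX i π η x = (φ x).1 :=
  orbitCoord_eq_of_add hquot hfree hη (by simpa using hemb.add_neg_of_add (hagree x hx))

theorem orbitCoord_add {β : Q → Q → A} (hemb : EmbedData MX i) (hquot : QuotData MX MQ i π)
    (hfree : FreeAction MX i) (hη : IsSection π η) (hβ : BetaSpec MX MQ i η β) {x y z : X}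
    (hxy : MX.add x y = some z) :
    orbitCoord MX i π η z =
      orbitCoord MX i π η x + orbitCoord MX i π η y - β (π x) (π y) := by
  obtain ⟨w, hw, hβw⟩ := hβ _ _ _ (hquot.hom.2 x y z hxy)
  obtain ⟨t, hηx, hxt⟩ := hemb.exists_add_of_add_add (add_orbitCoord hquot hη x) hxy
  obtain ⟨t', hηy, hyt'⟩ :=
    hemb.exists_add_of_add_add (add_orbitCoord hquot hη y) (by rw [MX.comm]; exact hηx)
  have ht' : t' = w := Option.some_inj.mp (by rw [← hηy, ← hw, MX.comm])
  subst ht'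
  have hz := hemb.add_of_add_add (hemb.add_neg_of_add hβw) (hemb.add_of_add_add hyt' hxt)
  rw [orbitCoord_eq_of_add hquot hfree hη hz, sub_eq_add_neg]

end Coordinate

section Trivialisation

variable {A X Q : Type*} [AddCommGroup A] {MX : PCM X} {MQ : PCM Q} {i : A → X} {π : X → Q}
  {η : Q → X} {φ' : X → A × Q}

theorem IsTriv.fst_section_eq_zero {C : Set X} {φ : X → A × Q} (hφ' : IsTriv MX MQ i π φ')
    (hext : ∀ x ∈ C, φ' x = φ x) (hagree : AgreesOnC MX i π C φ η) {x : X} (hx : x ∈ C) :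
    (φ' (η (π x))).1 = 0 := by
  have h := (hφ'.2.1 _ _ _ (hagree x hx)).2
  rw [hφ'.2.2.1, hext x hx] at h
  simp [h]

theorem IsTriv.obstruction_eq {β : Q → Q → A} (hφ' : IsTriv MX MQ i π φ')
    (hβ : BetaSpec MX MQ i η β) {q₁ q₂ q₁₂ : Q} (hq : MQ.add q₁ q₂ = some q₁₂) :
    β q₁ q₂ = (φ' (η q₁₂)).1 - (φ' (η q₁)).1 - (φ' (η q₂)).1 := by
  obtain ⟨w, hw, hβw⟩ := hβ _ _ _ hq
  rw [(hφ'.2.1 _ _ _ hβw).2, hφ'.2.2.1, (hφ'.2.1 _ _ _ hw).2]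
  abel

theorem isTriv_orbitCoord_sub {β : Q → Q → A} {γ : Q → A} (hemb : EmbedData MX i)
    (hquot : QuotData MX MQ i π) (hfree : FreeAction MX i) (hη : IsSection π η)
    (hη0 : η MQ.zero = MX.zero) (hβ : BetaSpec MX MQ i η β) (hγ0 : γ MQ.zero = 0)
    (hγβ : ∀ q₁ q₂ q₁₂, MQ.add q₁ q₂ = some q₁₂ → β q₁ q₂ = γ q₂ - γ q₁₂ + γ q₁) :
    IsTriv MX MQ i π fun x => (orbitCoord MX i π η x - γ (π x), π x) := by
  have hcoord := orbitCoord_embed hemb hquot hfree hη hη0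
  refine ⟨?_, fun x y z hxy => ⟨hquot.hom.2 x y z hxy, ?_⟩, fun a => ?_, fun _ => rfl⟩
  · simp only [← hemb.map_zero, hcoord, hquot.map_embed hemb, hγ0, sub_zero]
  · simp only [orbitCoord_add hemb hquot hfree hη hβ hxy, hγβ _ _ _ (hquot.hom.2 x y z hxy)]
    abel
  · simp only [hcoord, hquot.map_embed hemb, hγ0, sub_zero]

end Trivialisation

/-- Theorem 3.1: a local trivialisation `φ : C → A × C/A` extends to a
trivialisation `φ' : X → A × X/A` if and only if the obstruction class
`[β] ∈ H²(X/A, C/A; A)` vanishes, i.e. iff the obstruction cocycle `β`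
(defined from any section `η` agreeing with `φ⁻¹ ∘ in₂` on `C/A`) is the
coboundary `d¹γ` of some relative 1-cochain `γ ∈ C¹(X/A, C/A; A)`. -/
theorem extension_iff_obstruction_vanishes {A X Q : Type*} [AddCommGroup A]
    (MX : PCM X) (MQ : PCM Q) (i : A → X) (π : X → Q)
    (hemb : EmbedData MX i) (hquot : QuotData MX MQ i π)
    (hfree : FreeAction MX i)
    (C : Set X) (hC : IsSubPCM MX i C)
    (φ : X → A × Q) (hφ : IsLocalTriv MX MQ i π C φ)
    (η : Q → X) (hη : IsSection π η) (hagree : AgreesOnC MX i π C φ η)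
    (β : Q → Q → A) (hβ : BetaSpec MX MQ i η β) :
    (∃ φ' : X → A × Q, IsTriv MX MQ i π φ' ∧ ∀ x ∈ C, φ' x = φ x) ↔
    (∃ γ : Q → A, (∀ x ∈ C, γ (π x) = 0) ∧
      ∀ q₁ q₂ q₁₂, MQ.add q₁ q₂ = some q₁₂ →
        β q₁ q₂ = γ q₂ - γ q₁₂ + γ q₁) := by
  constructor
  · rintro ⟨φ', hφ', hext⟩
    refine ⟨fun q => -(φ' (η q)).1, fun x hx => ?_, fun q₁ q₂ q₁₂ hq => ?_⟩
    · simp [hφ'.fst_section_eq_zero hext hagree hx]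
    · beta_reduce
      rw [hφ'.obstruction_eq hβ hq]
      abel
  · rintro ⟨γ, hγC, hγβ⟩
    have hγ0 : γ MQ.zero = 0 := by simpa [hquot.hom.1] using hγC _ hC.1
    refine ⟨_, isTriv_orbitCoord_sub hemb hquot hfree hη
      (hagree.section_zero hemb hquot hC hφ) hβ hγ0 hγβ, fun x hx => ?_⟩
    rw [orbitCoord_of_mem hemb hquot hfree hη hagree hx, hγC x hx, sub_zero, ← hφ.2.2 x hx]
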